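/- Let U' and U'' be unitary operators on complex Hilbert spaces K' and K'' respectively, and let Y : K' → K'' be a bounded operator with ‖Y‖ ≤ 1 and Y∘U' = U''∘Y. Then there exists a minimal AA-unitary coupling of (U',K') and (U'',K'') realizing Y: a complex Hilbert space K, a unitary operator U on K, and linear isometries i' : K' → K, i'' : K'' → K with i'∘U' = U∘i', i''∘U'' = U∘i'', range i' + range i'' dense in K, and ⟨i''(k''), i'(k')⟩_K = ⟨k'', Y k'⟩_{K''} for all k' ∈ K', k'' ∈ K'' (equivalently (i'')* ∘ i' = Y). -/

import Mathlib

open ContinuousLinearMap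

/-- An Adamjan–Arov unitary coupling of two unitary operators `(U', K')` and `(U'', K'')`:
a Hilbert space `K`, a unitary operator `U` on `K`, and isometric embeddings
`i' : K' → K`, `i'' : K'' → K` with `i'∘U' = U∘i'` and `i''∘U'' = U∘i''`. -/
structure AACoupling (K' K'' : Type)
    [NormedAddCommGroup K'] [InnerProductSpace ℂ K'] [CompleteSpace K']
    [NormedAddCommGroup K''] [InnerProductSpace ℂ K''] [CompleteSpace K'']
    (U' : K' →L[ℂ] K') (U'' : K'' →L[ℂ] K'') where
  K : Type
  [instN : NormedAddCommGroup K]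
  [instI : InnerProductSpace ℂ K]
  [instC : CompleteSpace K]
  U : K →L[ℂ] K
  hU : U ∈ unitary (K →L[ℂ] K)
  i' : K' →L[ℂ] K
  i'' : K'' →L[ℂ] K
  hi' : Isometry i'
  hi'' : Isometry i''
  hint' : ∀ x : K', i' (U' x) = U (i' x)
  hint'' : ∀ x : K'', i'' (U'' x) = U (i'' x)

attribute [instance] AACoupling.instN AACoupling.instI AACoupling.instC

/-! With the defect operator `D = (1 - Y⋆Y)^{1/2}` one has `‖D x‖² + ‖Y x‖² = ‖x‖²`, so
`x ↦ (Y x, D x)` embeds `K'` isometrically into `K'' ⊕ closure (range D)`, with `K''` embedded as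
the first summand; the inner product of the two embeddings is then `⟪b, Y a⟫`. The intertwining
relation makes `U'` commute with `1 - Y⋆Y`, hence with `D`, so `U'' ⊕ U'` restricts to a unitary of
this space that intertwines both embeddings. Minimality: `(b, D a) = i' a + i'' (b - Y a)`. -/

lemma Submodule.topologicalClosure_range_mem_invtSubmodule {𝕜 E : Type*} [NormedField 𝕜]
    [SeminormedAddCommGroup E] [NormedSpace 𝕜 E] {D T : E →L[𝕜] E} (h : Commute D T) :
    (LinearMap.range (D : E →ₗ[𝕜] E)).topologicalClosure ∈
      Module.End.invtSubmodule (T : E →ₗ[𝕜] E) := by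
  refine Submodule.topologicalClosure_mem_invtSubmodule ?_
  rw [Module.End.mem_invtSubmodule_iff_forall_mem_of_mem]
  rintro _ ⟨x, rfl⟩
  exact ⟨T x, congr($h x)⟩

noncomputable def LinearIsometryEquiv.restrictInvtSubmodule {𝕜 E : Type*} [NormedField 𝕜]
    [SeminormedAddCommGroup E] [NormedSpace 𝕜 E] (e : E ≃ₗᵢ[𝕜] E) (p : Submodule 𝕜 E)
    (he : p ∈ Module.End.invtSubmodule (e : E →ₗ[𝕜] E))
    (he' : p ∈ Module.End.invtSubmodule (e.symm : E →ₗ[𝕜] E)) : p ≃ₗᵢ[𝕜] p :=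
  (e.submoduleMap p).trans <| LinearIsometryEquiv.ofEq _ _ <| le_antisymm
    ((Module.End.mem_invtSubmodule_iff_map_le _).mp he)
    (Module.End.mem_invtSubmodule_symm_iff_le_map.mp he')

namespace ContinuousLinearMap

section ProdL2

variable {𝕜 E F G : Type*} [NormedField 𝕜] [SeminormedAddCommGroup E] [NormedSpace 𝕜 E]
  [SeminormedAddCommGroup F] [NormedSpace 𝕜 F] [SeminormedAddCommGroup G] [NormedSpace 𝕜 G]

noncomputable def prodL2 (A : E →L[𝕜] F) (B : E →L[𝕜] G) : E →L[𝕜] WithLp 2 (F × G) :=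
  (WithLp.prodContinuousLinearEquiv 2 𝕜 F G).symm.toContinuousLinearMap ∘L A.prod B

@[simp]
lemma prodL2_apply (A : E →L[𝕜] F) (B : E →L[𝕜] G) (x : E) :
    A.prodL2 B x = WithLp.toLp 2 (A x, B x) := rfl

lemma isometry_prodL2 {A : E →L[𝕜] F} {B : E →L[𝕜] G}
    (h : ∀ x, ‖A x‖ ^ 2 + ‖B x‖ ^ 2 = ‖x‖ ^ 2) : Isometry (A.prodL2 B) :=
  AddMonoidHomClass.isometry_of_norm _ fun x => by
    rw [← sq_eq_sq₀ (norm_nonneg _) (norm_nonneg _), WithLp.prod_norm_sq_eq_of_L2]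
    exact h x

end ProdL2

section Defect

lemma adjoint_comp_self_le_one {𝕜 E F : Type*} [RCLike 𝕜]
    [NormedAddCommGroup E] [InnerProductSpace 𝕜 E] [CompleteSpace E]
    [NormedAddCommGroup F] [InnerProductSpace 𝕜 F] [CompleteSpace F] {Y : E →L[𝕜] F}
    (hY : ‖Y‖ ≤ 1) : adjoint Y ∘L Y ≤ 1 := by
  rw [le_def, isPositive_def']
  refine ⟨?_, fun x => ?_⟩
  · simp [IsSelfAdjoint, star_sub, star_eq_adjoint, adjoint_comp]
  · have hYx : ‖Y x‖ ≤ ‖x‖ := by simpa using Y.le_of_opNorm_le hY x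
    have : reApplyInnerSelf (1 - adjoint Y ∘L Y) x = ‖x‖ ^ 2 - ‖Y x‖ ^ 2 := by
      simp only [reApplyInnerSelf, sub_apply, one_apply_eq_self, comp_apply, inner_sub_left,
        adjoint_inner_left, map_sub, inner_self_eq_norm_sq]
    rw [this, sub_nonneg]
    gcongr

variable {E F : Type*} [NormedAddCommGroup E] [InnerProductSpace ℂ E] [CompleteSpace E]
  [NormedAddCommGroup F] [InnerProductSpace ℂ F] [CompleteSpace F]

noncomputable def defectOperator (Y : E →L[ℂ] F) : E →L[ℂ] E :=
  CFC.sqrt (1 - adjoint Y ∘L Y)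

lemma isSelfAdjoint_defectOperator (Y : E →L[ℂ] F) : IsSelfAdjoint (defectOperator Y) :=
  .of_nonneg (CFC.sqrt_nonneg _)

lemma norm_defectOperator_apply_sq_add {Y : E →L[ℂ] F} (hY : ‖Y‖ ≤ 1) (x : E) :
    ‖defectOperator Y x‖ ^ 2 + ‖Y x‖ ^ 2 = ‖x‖ ^ 2 := by
  have hD : adjoint (defectOperator Y) ∘L defectOperator Y = 1 - adjoint Y ∘L Y := by
    rw [(isSelfAdjoint_defectOperator Y).adjoint_eq]
    exact CFC.sqrt_mul_sqrt_self _ (sub_nonneg.mpr (adjoint_comp_self_le_one hY))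
  rw [apply_norm_sq_eq_inner_adjoint_left, apply_norm_sq_eq_inner_adjoint_left, hD]
  simp only [sub_apply, one_apply_eq_self, inner_sub_left, map_sub, inner_self_eq_norm_sq]
  ring

lemma commute_adjoint_comp_self {Y : E →L[ℂ] F} {U : E →L[ℂ] E} {V : F →L[ℂ] F}
    (hU : U * star U = 1) (hV : star V * V = 1) (hY : Y ∘L U = V ∘L Y) :
    Commute (adjoint Y ∘L Y) U := by
  have hconj : star U * (adjoint Y ∘L Y) * U = adjoint Y ∘L Y := calc
    star U * (adjoint Y ∘L Y) * U = adjoint (Y ∘L U) ∘L (Y ∘L U) := by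
      simp only [adjoint_comp, star_eq_adjoint, mul_def, comp_assoc]
    _ = adjoint Y ∘L (star V * V) ∘L Y := by
      simp only [hY, adjoint_comp, star_eq_adjoint, mul_def, comp_assoc]
    _ = adjoint Y ∘L Y := by rw [hV]; rfl
  calc adjoint Y ∘L Y * U = U * star U * (adjoint Y ∘L Y) * U := by rw [hU, one_mul]
    _ = U * (star U * (adjoint Y ∘L Y) * U) := by simp only [mul_assoc]
    _ = U * (adjoint Y ∘L Y) := by rw [hconj]

lemma commute_defectOperator {Y : E →L[ℂ] F} {U : E →L[ℂ] E} {V : F →L[ℂ] F}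
    (hU : U * star U = 1) (hV : star V * V = 1) (hY : Y ∘L U = V ∘L Y) :
    Commute (defectOperator Y) U :=
  ((Commute.one_left U).sub_left (commute_adjoint_comp_self hU hV hY)).cfcₙ_nnreal _

noncomputable def defectSpace (Y : E →L[ℂ] F) : Submodule ℂ E :=
  (LinearMap.range (defectOperator Y : E →ₗ[ℂ] E)).topologicalClosure

instance (Y : E →L[ℂ] F) : CompleteSpace (defectSpace Y) :=
  (Submodule.isClosed_topologicalClosure _).completeSpace_coe

noncomputable def defectMap (Y : E →L[ℂ] F) : E →L[ℂ] defectSpace Y :=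
  (defectOperator Y).codRestrict _ fun x => Submodule.le_topologicalClosure _ ⟨x, rfl⟩

lemma denseRange_defectMap (Y : E →L[ℂ] F) : DenseRange (defectMap Y) := by
  rw [DenseRange, Topology.IsInducing.subtypeVal.dense_iff]
  intro x
  rw [← Set.range_comp]
  exact x.2

noncomputable def defectUnitary {Y : E →L[ℂ] F} {U : E →L[ℂ] E} {V : F →L[ℂ] F}
    (hU : U ∈ unitary (E →L[ℂ] E)) (hV : star V * V = 1) (hY : Y ∘L U = V ∘L Y) :
    defectSpace Y ≃ₗᵢ[ℂ] defectSpace Y :=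
  have hcomm := commute_defectOperator (Unitary.mul_star_self_of_mem hU) hV hY
  (Unitary.linearIsometryEquiv ⟨U, hU⟩).restrictInvtSubmodule _
    (Submodule.topologicalClosure_range_mem_invtSubmodule hcomm)
    (Submodule.topologicalClosure_range_mem_invtSubmodule <|
      (isSelfAdjoint_defectOperator Y).star_eq ▸ hcomm.star_star)

end Defect

end ContinuousLinearMap

section Coupling

variable {K' K'' : Type}
  [NormedAddCommGroup K'] [InnerProductSpace ℂ K'] [CompleteSpace K']
  [NormedAddCommGroup K''] [InnerProductSpace ℂ K''] [CompleteSpace K'']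
  {U' : K' →L[ℂ] K'} {U'' : K'' →L[ℂ] K''} {Y : K' →L[ℂ] K''}

noncomputable def defectCoupling (hU' : U' ∈ unitary (K' →L[ℂ] K'))
    (hU'' : U'' ∈ unitary (K'' →L[ℂ] K'')) (hY : ‖Y‖ ≤ 1) (hYint : Y ∘L U' = U'' ∘L Y) :
    AACoupling K' K'' U' U'' where
  K := WithLp 2 (K'' × defectSpace Y)
  U := Unitary.linearIsometryEquiv.symm <|
    (Unitary.linearIsometryEquiv ⟨U'', hU''⟩).withLpProdCongr 2
      (defectUnitary hU' (Unitary.star_mul_self_of_mem hU'') hYint)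
  hU := Subtype.property _
  i' := Y.prodL2 (defectMap Y)
  i'' := (1 : K'' →L[ℂ] K'').prodL2 0
  hi' := isometry_prodL2 fun x => by
    rw [add_comm]
    exact norm_defectOperator_apply_sq_add hY x
  hi'' := isometry_prodL2 fun x => by simp
  hint' x := congrArg (WithLp.toLp 2) <| Prod.ext congr($hYint x) <| Subtype.ext
    congr($(commute_defectOperator (Unitary.mul_star_self_of_mem hU')
      (Unitary.star_mul_self_of_mem hU'') hYint) x)
  hint'' x := congrArg (WithLp.toLp 2) <| Prod.ext rfl
    (map_zero (defectUnitary hU' (Unitary.star_mul_self_of_mem hU'') hYint)).symm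

lemma defectCoupling_inner_i''_i' (hU' : U' ∈ unitary (K' →L[ℂ] K'))
    (hU'' : U'' ∈ unitary (K'' →L[ℂ] K'')) (hY : ‖Y‖ ≤ 1) (hYint : Y ∘L U' = U'' ∘L Y)
    (a : K') (b : K'') :
    inner ℂ ((defectCoupling hU' hU'' hY hYint).i'' b) ((defectCoupling hU' hU'' hY hYint).i' a) =
      inner ℂ b (Y a) := by
  change inner ℂ ((1 : K'' →L[ℂ] K'').prodL2 0 b) (Y.prodL2 (defectMap Y) a) = _
  simp

lemma dense_defectCoupling_range_add (hU' : U' ∈ unitary (K' →L[ℂ] K'))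
    (hU'' : U'' ∈ unitary (K'' →L[ℂ] K'')) (hY : ‖Y‖ ≤ 1) (hYint : Y ∘L U' = U'' ∘L Y) :
    Dense {x : (defectCoupling hU' hU'' hY hYint).K | ∃ (a : K') (b : K''),
      x = (defectCoupling hU' hU'' hY hYint).i' a + (defectCoupling hU' hU'' hY hYint).i'' b} := by
  change Dense {x : WithLp 2 (K'' × defectSpace Y) | ∃ (a : K') (b : K''),
    x = Y.prodL2 (defectMap Y) a + (1 : K'' →L[ℂ] K'').prodL2 0 b}
  have hprod : Dense (WithLp.toLp 2 '' (Set.univ ×ˢ Set.range (defectMap Y))) :=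
    let e := (WithLp.prodContinuousLinearEquiv 2 ℂ K'' (defectSpace Y)).symm
    e.surjective.denseRange.dense_image e.continuous (dense_univ.prod (denseRange_defectMap Y))
  refine hprod.mono ?_
  rintro _ ⟨⟨b, _⟩, ⟨-, a, rfl⟩, rfl⟩
  refine ⟨a, b - Y a, ?_⟩
  rw [prodL2_apply, prodL2_apply, ← WithLp.toLp_add]
  simp

end Coupling

theorem stmt_7 {K' K'' : Type}
    [NormedAddCommGroup K'] [InnerProductSpace ℂ K'] [CompleteSpace K']
    [NormedAddCommGroup K''] [InnerProductSpace ℂ K''] [CompleteSpace K'']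
    (U' : K' →L[ℂ] K') (hU' : U' ∈ unitary (K' →L[ℂ] K'))
    (U'' : K'' →L[ℂ] K'') (hU'' : U'' ∈ unitary (K'' →L[ℂ] K''))
    (Y : K' →L[ℂ] K'') (hY : ‖Y‖ ≤ 1) (hYint : Y.comp U' = U''.comp Y) :
    ∃ C : AACoupling K' K'' U' U'',
      Dense {x : C.K | ∃ (a : K') (b : K''), x = C.i' a + C.i'' b} ∧
      (∀ (k' : K') (k'' : K''),
        (inner ℂ (C.i'' k'') (C.i' k') : ℂ) = inner ℂ k'' (Y k')) ∧
      (adjoint C.i'').comp C.i' = Y := by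
  refine ⟨defectCoupling hU' hU'' hY hYint, dense_defectCoupling_range_add hU' hU'' hY hYint,
    fun a b => defectCoupling_inner_i''_i' hU' hU'' hY hYint a b, ?_⟩
  ext a
  refine ext_inner_left ℂ fun b => ?_
  rw [comp_apply, adjoint_inner_right]
  exact defectCoupling_inner_i''_i' hU' hU'' hY hYint a b
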